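/- If R is a Prüfer domain, then every edge labeled graph (G, α) over R satisfies the Universal Difference Property: for all vertices u, v connected in G and every y ∈ ⋂_{P ∈ P(u,v)} α(P), there exists a spline ρ on (G, α) with ρ(u) − ρ(v) = y. -/

import Mathlib

open SimpleGraph

/-- A generalized spline on an edge labeled graph. -/
def IsSpline {V R : Type*} [CommRing R] (G : SimpleGraph V)
    (α : Sym2 V → Ideal R) (ρ : V → R) : Prop :=
  ∀ u v : V, G.Adj u v → ρ u - ρ v ∈ α s(u, v)

/-- The sum of the ideals labeling the edges of a walk. -/
def walkIdealSum {V R : Type*} [CommRing R] (G : SimpleGraph V)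
    (α : Sym2 V → Ideal R) {u w : V} (p : G.Walk u w) : Ideal R :=
  (p.edges.map α).sum

/-- The intersection of `α(P)` over all paths `P` from `u` to `w`. -/
def pathsInf {V R : Type*} [CommRing R] (G : SimpleGraph V)
    (α : Sym2 V → Ideal R) (u w : V) : Ideal R :=
  ⨅ (p : G.Walk u w) (_ : p.IsPath), walkIdealSum G α p

/-- The Universal Difference Property. -/
def UDP {V R : Type*} [CommRing R] (G : SimpleGraph V)
    (α : Sym2 V → Ideal R) : Prop :=
  ∀ u w : V, G.Reachable u w → ∀ x ∈ pathsInf G α u w,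
    ∃ ρ : V → R, IsSpline G α ρ ∧ ρ u - ρ w = x

/-- A Prüfer domain: every nonzero finitely generated ideal is invertible. -/
def IsPruferDomain (R : Type*) [CommRing R] [IsDomain R] : Prop :=
  ∀ I : Ideal R, I ≠ ⊥ → I.FG →
    IsUnit (I : FractionalIdeal (nonZeroDivisors R) (FractionRing R))

/-!
Over a Prüfer domain the lattice of ideals is distributive: for `x = j + k` the invertible ideal
`(j) + (k)` contains `(x)`, which forces `x ∈ (x) ⊓ (j) + (x) ⊓ (k)`. Distributivity gives the
Chinese Remainder Theorem for finitely many ideals under pairwise compatibility.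

Write `D a b` for `pathsInf G α a b`. It is symmetric, `D a a = ⊥`, and
`D a b ≤ D v a ⊔ D v b`, since any path `v ⤳ a` followed by a path `v ⤳ b` yields a walk `a ⤳ b`
and there are finitely many paths. Start from `ρ u = y`, `ρ w = 0` and add the vertices one at a
time, keeping `ρ a - ρ b ∈ D a b`; the Chinese Remainder Theorem supplies each new value. On an
edge, `D a b ≤ α s(a, b)`, so the result is a spline.
-/

section FractionalIdeal
variable {R K : Type*} [CommRing R] [Field K] [Algebra R K] {S : Submonoid R}

-- With `u = b + c` invertible, `a = a b u⁻¹ + a c u⁻¹`, and `a ≤ u` puts the two summands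
-- in `a ⊓ b` and `a ⊓ c`.
theorem FractionalIdeal.le_inf_add_inf_of_le_add {a b c : FractionalIdeal S K}
    (hbc : IsUnit (b + c)) (ha : a ≤ b + c) : a ≤ a ⊓ b + a ⊓ c := by
  obtain ⟨u, hu⟩ := hbc
  have mul_inv_le_one : ∀ d ≤ b + c, d * ↑u⁻¹ ≤ 1 := fun d hd =>
    (mul_le_mul_left (hu ▸ hd) _).trans_eq u.mul_inv
  have mul_mul_inv_le : ∀ d ≤ b + c, a * d * ↑u⁻¹ ≤ a ⊓ d := fun d hd => le_inf
    (calc a * d * ↑u⁻¹ = a * (d * ↑u⁻¹) := mul_assoc _ _ _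
      _ ≤ a := mul_le_of_le_one_right' (mul_inv_le_one d hd))
    (calc a * d * ↑u⁻¹ = d * (a * ↑u⁻¹) := by ring
      _ ≤ d := mul_le_of_le_one_right' (mul_inv_le_one a ha))
  calc a = a * (b + c) * ↑u⁻¹ := by rw [mul_assoc, ← hu, u.mul_inv, mul_one]
    _ = a * b * ↑u⁻¹ + a * c * ↑u⁻¹ := by ring
    _ ≤ a ⊓ b + a ⊓ c := add_le_add (mul_mul_inv_le b le_self_add) (mul_mul_inv_le c le_add_self)

end FractionalIdeal

namespace IsPruferDomain
variable {R : Type*} [CommRing R] [IsDomain R]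

theorem inf_sup_le (hR : IsPruferDomain R) (I J K : Ideal R) :
    I ⊓ (J ⊔ K) ≤ I ⊓ J ⊔ I ⊓ K := by
  rintro _ ⟨hxI, hxJK⟩
  obtain ⟨j, hj, k, hk, rfl⟩ := Submodule.mem_sup.1 hxJK
  obtain h0 | h0 := eq_or_ne (j + k) 0
  · exact h0 ▸ zero_mem _
  set A := Ideal.span {j + k}
  set B := Ideal.span {j}
  set C := Ideal.span {k}
  have hA : A ≤ B ⊔ C := (Ideal.span_singleton_le_iff_mem _).2
    (Submodule.add_mem_sup (Ideal.mem_span_singleton_self j) (Ideal.mem_span_singleton_self k))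
  have hBC : B ⊔ C ≠ ⊥ := fun h => h0 (Ideal.span_singleton_eq_bot.1 (le_bot_iff.1 (h ▸ hA)))
  have hunit := hR _ hBC ((Submodule.fg_span_singleton j).sup (Submodule.fg_span_singleton k))
  have key : A ≤ A ⊓ B ⊔ A ⊓ C := by
    rw [← FractionalIdeal.coeIdeal_le_coeIdeal (FractionRing R)] at hA ⊢
    rw [FractionalIdeal.coeIdeal_sup] at hA hunit ⊢
    simp only [FractionalIdeal.coeIdeal_inf]
    exact FractionalIdeal.le_inf_add_inf_of_le_add hunit hA
  have le_of_mem {x : R} {L : Ideal R} (hx : x ∈ L) : Ideal.span {x} ≤ L :=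
    (Ideal.span_singleton_le_iff_mem _).2 hx
  exact sup_le_sup (inf_le_inf (le_of_mem hxI) (le_of_mem hj))
    (inf_le_inf (le_of_mem hxI) (le_of_mem hk)) (key (Ideal.mem_span_singleton_self _))

abbrev distribLattice (hR : IsPruferDomain R) : DistribLattice (Ideal R) :=
  DistribLattice.ofInfSupLe hR.inf_sup_le

theorem sup_finsetInf (hR : IsPruferDomain R) {ι : Type*} (s : Finset ι) (f : ι → Ideal R)
    (I : Ideal R) : I ⊔ s.inf f = s.inf fun i => I ⊔ f i :=
  letI := hR.distribLattice
  s.inf_sup_distrib_left f I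

theorem exists_forall_sub_mem (hR : IsPruferDomain R) {ι : Type*} (s : Finset ι)
    (I : ι → Ideal R) (x : ι → R) (hx : ∀ i ∈ s, ∀ j ∈ s, x i - x j ∈ I i ⊔ I j) :
    ∃ r : R, ∀ i ∈ s, r - x i ∈ I i := by
  classical
  induction s using Finset.induction with
  | empty => exact ⟨0, by simp⟩
  | @insert a s _ ih =>
    obtain ⟨r, hr⟩ := ih fun i hi j hj =>
      hx i (Finset.mem_insert_of_mem hi) j (Finset.mem_insert_of_mem hj)
    have hxa : x a - r ∈ I a ⊔ s.inf I := by
      rw [hR.sup_finsetInf, Submodule.mem_finsetInf]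
      intro i hi
      have hri : x i - r ∈ I i := by simpa using neg_mem (hr i hi)
      simpa using add_mem (hx a (s.mem_insert_self a) i (Finset.mem_insert_of_mem hi))
        (Ideal.mem_sup_right hri)
    obtain ⟨p, hp, q, hq, hpq⟩ := Submodule.mem_sup.1 hxa
    refine ⟨r + q, Finset.forall_mem_insert _ _ _ |>.2 ⟨?_, fun i hi => ?_⟩⟩
    · have : r + q - x a = -p := by linear_combination hpq
      exact this ▸ neg_mem hp
    · rw [add_sub_right_comm]
      exact add_mem (hr i hi) (Finset.inf_le (f := I) hi hq)

end IsPruferDomain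

section Compatible
variable {V R : Type*} [CommRing R]

def IsCompatibleOn (D : V → V → Ideal R) (s : Finset V) (ρ : V → R) : Prop :=
  ∀ a ∈ s, ∀ b ∈ s, ρ a - ρ b ∈ D a b

variable [DecidableEq V] {D : V → V → Ideal R}

theorem exists_isCompatibleOn_pair (hsymm : ∀ a b, D a b = D b a) (hself : ∀ a, D a a = ⊥)
    {u w : V} {x : R} (hx : x ∈ D u w) : ∃ ρ : V → R, IsCompatibleOn D {u, w} ρ ∧ ρ u - ρ w = x := by
  obtain rfl | huw := eq_or_ne u w
  · rw [hself, Ideal.mem_bot] at hx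
    exact ⟨0, fun a _ b _ => by simp, by simp [hx]⟩
  refine ⟨fun t => if t = u then x else 0, ?_, by simp [huw.symm]⟩
  have hx' : -x ∈ D w u := hsymm u w ▸ neg_mem hx
  simp [IsCompatibleOn, huw.symm, hx, hx']

variable [IsDomain R]

theorem IsPruferDomain.exists_update_isCompatibleOn (hR : IsPruferDomain R)
    (hsymm : ∀ a b, D a b = D b a) (htri : ∀ v a b, D a b ≤ D v a ⊔ D v b)
    {s : Finset V} {ρ : V → R} (hρ : IsCompatibleOn D s ρ) (v : V) :
    ∃ ρ' : V → R, (∀ a ∈ s, ρ' a = ρ a) ∧ IsCompatibleOn D (insert v s) ρ' := by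
  by_cases hv : v ∈ s
  · exact ⟨ρ, fun _ _ => rfl, by rwa [Finset.insert_eq_of_mem hv]⟩
  obtain ⟨r, hr⟩ := hR.exists_forall_sub_mem s (D v) ρ fun a ha b hb => htri v a b (hρ a ha b hb)
  have hne : ∀ a ∈ s, a ≠ v := fun a ha h => hv (h ▸ ha)
  refine ⟨Function.update ρ v r, fun a ha => Function.update_of_ne (hne a ha) _ _, ?_⟩
  simp only [IsCompatibleOn, Finset.forall_mem_insert, Function.update_self]
  refine ⟨⟨by simp, fun b hb => ?_⟩, fun a ha => ⟨?_, fun b hb => ?_⟩⟩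
  · simpa [Function.update_of_ne (hne b hb)] using hr b hb
  · simpa [Function.update_of_ne (hne a ha), hsymm a v] using neg_mem (hr a ha)
  · simpa [Function.update_of_ne (hne a ha), Function.update_of_ne (hne b hb)] using hρ a ha b hb

theorem IsPruferDomain.exists_isCompatibleOn_univ [Fintype V] (hR : IsPruferDomain R)
    (hsymm : ∀ a b, D a b = D b a) (htri : ∀ v a b, D a b ≤ D v a ⊔ D v b)
    {s : Finset V} {ρ : V → R} (hρ : IsCompatibleOn D s ρ) :
    ∃ ρ' : V → R, (∀ a ∈ s, ρ' a = ρ a) ∧ IsCompatibleOn D Finset.univ ρ' := by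
  suffices ∀ t : Finset V, ∃ ρ' : V → R, (∀ a ∈ s, ρ' a = ρ a) ∧ IsCompatibleOn D (t ∪ s) ρ' by
    obtain ⟨ρ', hagree, hρ'⟩ := this Finset.univ
    exact ⟨ρ', hagree, Finset.union_eq_left.2 s.subset_univ ▸ hρ'⟩
  intro t
  induction t using Finset.induction with
  | empty => exact ⟨ρ, fun _ _ => rfl, by simpa using hρ⟩
  | @insert v t _ ih =>
    obtain ⟨ρ₁, hρ₁s, hρ₁⟩ := ih
    obtain ⟨ρ₂, hρ₂ts, hρ₂⟩ := hR.exists_update_isCompatibleOn hsymm htri hρ₁ v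
    refine ⟨ρ₂, fun a ha => (hρ₂ts a (Finset.mem_union_right _ ha)).trans (hρ₁s a ha), ?_⟩
    rwa [Finset.insert_union]

end Compatible

section Paths
variable {V R : Type*} [CommRing R] {G : SimpleGraph V} {α : Sym2 V → Ideal R}

theorem walkIdealSum_le_iff {u w : V} {p : G.Walk u w} {K : Ideal R} :
    walkIdealSum G α p ≤ K ↔ ∀ e ∈ p.edges, α e ≤ K := by
  unfold walkIdealSum
  induction p.edges with
  | nil => simp
  | cons e l ih => simp [Submodule.add_eq_sup, ih]

theorem walkIdealSum_append {u v w : V} (p : G.Walk u v) (q : G.Walk v w) :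
    walkIdealSum G α (p.append q) = walkIdealSum G α p ⊔ walkIdealSum G α q := by
  simp [walkIdealSum, Walk.edges_append, Submodule.add_eq_sup]

theorem walkIdealSum_reverse {u w : V} (p : G.Walk u w) :
    walkIdealSum G α p.reverse = walkIdealSum G α p := by
  simp [walkIdealSum, Walk.edges_reverse, List.sum_reverse]

theorem pathsInf_le_walkIdealSum {u w : V} (p : G.Walk u w) :
    pathsInf G α u w ≤ walkIdealSum G α p := by
  classical
  refine (iInf₂_le p.bypass p.bypass_isPath).trans (walkIdealSum_le_iff.2 fun e he => ?_)
  exact walkIdealSum_le_iff.1 le_rfl e (p.edges_bypass_subset_edges he)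

theorem pathsInf_comm (u w : V) : pathsInf G α u w = pathsInf G α w u := by
  have key : ∀ a b : V, pathsInf G α a b ≤ pathsInf G α b a := fun a b =>
    le_iInf₂ fun p _ => (pathsInf_le_walkIdealSum p.reverse).trans_eq (walkIdealSum_reverse p)
  exact le_antisymm (key u w) (key w u)

theorem pathsInf_self (u : V) : pathsInf G α u u = ⊥ :=
  le_bot_iff.1 ((pathsInf_le_walkIdealSum Walk.nil).trans_eq (by simp [walkIdealSum]))

theorem pathsInf_le_of_adj {u w : V} (h : G.Adj u w) : pathsInf G α u w ≤ α s(u, w) :=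
  (pathsInf_le_walkIdealSum h.toWalk).trans_eq (by simp [walkIdealSum])

theorem pathsInf_eq_finsetInf [Fintype V] [DecidableEq V] [DecidableRel G.Adj] (u w : V) :
    pathsInf G α u w = Finset.univ.inf fun p : G.Path u w => walkIdealSum G α p.1 := by
  rw [Finset.inf_univ_eq_iInf, pathsInf, iInf_subtype']

theorem pathsInf_le_sup [IsDomain R] [Finite V] (hR : IsPruferDomain R) (v a b : V) :
    pathsInf G α a b ≤ pathsInf G α v a ⊔ pathsInf G α v b := by
  classical
  have := Fintype.ofFinite V
  rw [pathsInf_eq_finsetInf v a, pathsInf_eq_finsetInf v b, hR.sup_finsetInf]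
  refine Finset.le_inf fun q _ => ?_
  rw [sup_comm, hR.sup_finsetInf]
  refine Finset.le_inf fun p _ => ?_
  calc pathsInf G α a b ≤ walkIdealSum G α (p.1.reverse.append q.1) := pathsInf_le_walkIdealSum _
    _ = walkIdealSum G α q.1 ⊔ walkIdealSum G α p.1 := by
      rw [walkIdealSum_append, walkIdealSum_reverse, sup_comm]

end Paths

theorem prufer_UDP {V R : Type*} [Fintype V] [CommRing R] [IsDomain R]
    (hR : IsPruferDomain R) (G : SimpleGraph V) (α : Sym2 V → Ideal R) :
    UDP G α := by
  classical
  intro u w _ x hx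
  obtain ⟨ρ₀, hρ₀, hρ₀x⟩ := exists_isCompatibleOn_pair pathsInf_comm pathsInf_self hx
  obtain ⟨ρ, hρρ₀, hρ⟩ :=
    hR.exists_isCompatibleOn_univ pathsInf_comm (pathsInf_le_sup hR) hρ₀
  refine ⟨ρ, fun a b hab => pathsInf_le_of_adj hab (hρ a (by simp) b (by simp)), ?_⟩
  rw [hρρ₀ u (by simp), hρρ₀ w (by simp), hρ₀x]
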